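/- Let δ, s > 0 and let E ⊆ ℝ^d be a set with s-dimensional Hausdorff content H^s_∞(E) = c > 0. Then there exists a (δ, s)-set P ⊆ E with #P ≳_d c · δ^{-s}, i.e., P is δ-separated, satisfies #(P ∩ B(x,r)) ≤ (r/δ)^s for all x ∈ ℝ^d and r ≥ δ, and has cardinality at least C_d · c · δ^{-s} for some constant C_d > 0 depending only on d. -/

import Mathlib

open Metric Set
open scoped ENNReal

/-- The `s`-dimensional Hausdorff content of a set `E ⊆ ℝ^d`:
`H^s_∞(E) = inf { Σ_i (diam U_i)^s : E ⊆ ∪_i U_i }`. -/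
noncomputable def hausdorffContent (d : ℕ) (s : ℝ) (E : Set (EuclideanSpace ℝ (Fin d))) : ℝ≥0∞ :=
  ⨅ (U : ℕ → Set (EuclideanSpace ℝ (Fin d))) (_ : E ⊆ ⋃ i, U i),
    ∑' i, EMetric.diam (U i) ^ s

/-!
Take a `(δ,s)`-subset `P` of `E` that cannot be enlarged (unless it is already as large as
needed). Then every point of `E` lies in a heavy ball `B(y,r)`, `r ≥ δ`, already holding half of
the `(r/δ)^s` points it may hold. Vitali's lemma extracts disjoint heavy balls whose fourfold
enlargements cover `E`, so `H^s_∞(E) ≤ ∑ (8r)^s ≤ 2·8^s δ^s #P`. For `s > d` the content vanishes,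
so `8^s ≤ 8^d` in the remaining case.
-/

open MeasureTheory

theorem Set.sum_ncard_inter_le_ncard {α ι : Type*} {P : Set α} (hP : P.Finite) (U : Finset ι)
    {B : ι → Set α} (hB : (U : Set ι).PairwiseDisjoint B) :
    ∑ i ∈ U, (P ∩ B i).ncard ≤ P.ncard := by
  rw [← finsum_mem_coe_finset,
    ← U.finite_toSet.ncard_biUnion (fun i _ => hP.inter_of_left _)
      (hB.mono fun i => inter_subset_right)]
  exact ncard_le_ncard (iUnion₂_subset fun i _ => inter_subset_left) hP

section DeltaSSet

variable {X : Type*} [PseudoMetricSpace X] {δ s : ℝ} {P E : Set X}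

def IsDeltaSSet (δ s : ℝ) (P : Set X) : Prop :=
  P.Finite ∧ (∀ x ∈ P, ∀ y ∈ P, x ≠ y → δ ≤ dist x y) ∧
    ∀ (x : X) (r : ℝ), δ ≤ r → ((P ∩ closedBall x r).ncard : ℝ) ≤ (r / δ) ^ s

theorem isDeltaSSet_empty (hδ : 0 < δ) : IsDeltaSSet δ s (∅ : Set X) :=
  ⟨finite_empty, by simp, fun _ r hr => by
    simpa using Real.rpow_nonneg (div_nonneg (hδ.le.trans hr) hδ.le) s⟩

def IsHeavyBall (δ s : ℝ) (P : Set X) (y : X) (r : ℝ) : Prop :=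
  δ ≤ r ∧ (r / δ) ^ s ≤ 2 * (P ∩ closedBall y r).ncard

theorem IsHeavyBall.nonempty {y : X} {r : ℝ} (hδ : 0 < δ) (h : IsHeavyBall δ s P y r) :
    (P ∩ closedBall y r).Nonempty := by
  refine nonempty_of_ncard_ne_zero fun h0 => ?_
  have := h.2
  rw [h0, Nat.cast_zero, mul_zero] at this
  exact this.not_gt (Real.rpow_pos_of_pos (div_pos (hδ.trans_le h.1) hδ) s)

theorem isHeavyBall_of_mem (hδ : 0 < δ) (hP : P.Finite) {p : X} (hp : p ∈ P) :
    IsHeavyBall δ s P p δ := by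
  have hone : 1 ≤ (P ∩ closedBall p δ).ncard :=
    (ncard_pos (hP.inter_of_left _)).2 ⟨p, hp, mem_closedBall_self hδ.le⟩
  refine ⟨le_rfl, ?_⟩
  rw [div_self hδ.ne', Real.one_rpow]
  have : (1 : ℝ) ≤ (P ∩ closedBall p δ).ncard := by exact_mod_cast hone
  linarith

theorem exists_isHeavyBall_of_not_isDeltaSSet_insert (hδ : 0 < δ) (hs : 0 ≤ s)
    (hP : IsDeltaSSet δ s P) {x : X} (hx : x ∉ P) (hxP : ¬ IsDeltaSSet δ s (insert x P)) :
    ∃ y r, x ∈ closedBall y r ∧ IsHeavyBall δ s P y r := by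
  obtain ⟨hfin, hsep, hcount⟩ := hP
  simp only [IsDeltaSSet, hfin.insert x, true_and, not_and_or, not_forall, not_le] at hxP
  rcases hxP with ⟨a, ha, b, hb, hab, hlt⟩ | ⟨y, r, hr, hlt⟩
  · obtain ⟨p, hp, hxp⟩ : ∃ p ∈ P, dist x p < δ := by
      rcases ha with rfl | ha <;> rcases hb with rfl | hb
      · exact absurd rfl hab
      · exact ⟨b, hb, hlt⟩
      · exact ⟨a, ha, by rwa [dist_comm]⟩
      · exact absurd (hsep a ha b hb hab) hlt.not_ge
    exact ⟨p, δ, mem_closedBall.2 hxp.le, isHeavyBall_of_mem hδ hfin hp⟩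
  · have hxB : x ∈ closedBall y r := by
      by_contra hxB
      rw [insert_inter_of_notMem hxB] at hlt
      exact hlt.not_ge (hcount y r hr)
    rw [insert_inter_of_mem hxB, ncard_insert_of_notMem (fun h => hx h.1) (hfin.inter_of_left _),
      Nat.cast_succ] at hlt
    have hone : 1 ≤ (r / δ) ^ s := Real.one_le_rpow ((one_le_div hδ).2 hr) hs
    have hpos : (0 : ℝ) < (P ∩ closedBall y r).ncard := by linarith
    have : (1 : ℝ) ≤ (P ∩ closedBall y r).ncard := by
      exact_mod_cast Nat.one_le_iff_ne_zero.2 (by exact_mod_cast hpos.ne')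
    exact ⟨y, r, hxB, hr, by linarith⟩

theorem exists_isDeltaSSet_le_ncard_or_maximal (hδ : 0 < δ) (N : ℕ) :
    ∃ P ⊆ E, IsDeltaSSet δ s P ∧
      (N ≤ P.ncard ∨ ∀ x ∈ E, x ∉ P → ¬ IsDeltaSSet δ s (insert x P)) := by
  by_cases! hlarge : ∃ P ⊆ E, IsDeltaSSet δ s P ∧ N ≤ P.ncard
  · obtain ⟨P, hPE, hP, hN⟩ := hlarge
    exact ⟨P, hPE, hP, Or.inl hN⟩
  set S := {n | ∃ P ⊆ E, IsDeltaSSet δ s P ∧ P.ncard = n}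
  have hS : BddAbove S := ⟨N, by rintro _ ⟨P, hPE, hP, rfl⟩; exact (hlarge P hPE hP).le⟩
  obtain ⟨P, hPE, hP, hPcard⟩ :=
    Nat.sSup_mem ⟨0, show 0 ∈ S from ⟨∅, empty_subset E, isDeltaSSet_empty hδ, ncard_empty X⟩⟩ hS
  refine ⟨P, hPE, hP, Or.inr fun x hxE hx hins => ?_⟩
  have := le_csSup hS ⟨_, insert_subset hxE hPE, hins, rfl⟩
  rw [ncard_insert_of_notMem hx hP.1] at this
  omega

theorem exists_finset_pairwiseDisjoint_isHeavyBall (hδ : 0 < δ) (hs : 0 < s) (hP : P.Finite)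
    (hE : ∀ x ∈ E, ∃ y r, x ∈ closedBall y r ∧ IsHeavyBall δ s P y r) :
    ∃ U : Finset (X × ℝ), (∀ b ∈ U, IsHeavyBall δ s P b.1 b.2) ∧
      (U : Set (X × ℝ)).PairwiseDisjoint (fun b => closedBall b.1 b.2) ∧
      E ⊆ ⋃ b ∈ U, closedBall b.1 (4 * b.2) := by
  set t := {b : X × ℝ | IsHeavyBall δ s P b.1 b.2}
  have hR : ∀ b ∈ t, b.2 ≤ δ * (2 * P.ncard) ^ s⁻¹ := by
    rintro ⟨y, r⟩ ⟨hr, hheavy⟩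
    have : (r / δ) ^ s ≤ 2 * P.ncard := hheavy.trans <| mul_le_mul_of_nonneg_left
      (Nat.cast_le.2 (ncard_le_ncard inter_subset_left hP)) zero_le_two
    rw [← div_le_iff₀' hδ, Real.le_rpow_inv_iff_of_pos (div_nonneg (hδ.le.trans hr) hδ.le)
      (by positivity) hs]
    exact this
  obtain ⟨u, hut, hdisj, hcover⟩ :=
    Vitali.exists_disjoint_subfamily_covering_enlargement_closedBall t Prod.fst Prod.snd _ hR 4
      (by norm_num)
  -- Distinct balls of `u` are disjoint, so they meet `P` in distinct nonempty subsets.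
  have hu : u.Finite := by
    refine Finite.of_finite_image (f := fun b => P ∩ closedBall b.1 b.2)
      (hP.finite_subsets.subset ?_) fun a ha b hb hab => ?_
    · rintro _ ⟨b, -, rfl⟩
      exact inter_subset_left
    · have hab : P ∩ closedBall a.1 a.2 = P ∩ closedBall b.1 b.2 := hab
      by_contra hne
      obtain ⟨p, hp⟩ := (hut ha).nonempty hδ
      exact (hdisj ha hb hne).ne_of_mem hp.2 (hab ▸ hp).2 rfl
  refine ⟨hu.toFinset, fun b hb => hut (hu.mem_toFinset.1 hb), by simpa using hdisj,
    fun x hx => ?_⟩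
  obtain ⟨y, r, hx, hheavy⟩ := hE x hx
  obtain ⟨b, hb, hsub⟩ := hcover (y, r) hheavy
  exact mem_biUnion (hu.mem_toFinset.2 hb) (hsub hx)

theorem outerMeasure_le_of_forall_mem_isHeavyBall (μ : OuterMeasure X)
    (hμ : ∀ y r, 0 ≤ r → μ (closedBall y r) ≤ ENNReal.ofReal ((2 * r) ^ s))
    (hδ : 0 < δ) (hs : 0 < s) (hP : P.Finite)
    (hE : ∀ x ∈ E, ∃ y r, x ∈ closedBall y r ∧ IsHeavyBall δ s P y r) :
    μ E ≤ ENNReal.ofReal (2 * 8 ^ s * δ ^ s * P.ncard) := by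
  obtain ⟨U, hheavy, hdisj, hcover⟩ := exists_finset_pairwiseDisjoint_isHeavyBall hδ hs hP hE
  have hpos : ∀ b ∈ U, 0 < b.2 := fun b hb => hδ.trans_le (hheavy b hb).1
  have hball : ∀ b ∈ U,
      (2 * (4 * b.2)) ^ s ≤ 2 * 8 ^ s * δ ^ s * (P ∩ closedBall b.1 b.2).ncard := by
    intro b hb
    calc (2 * (4 * b.2)) ^ s = 8 ^ s * δ ^ s * (b.2 / δ) ^ s := by
          rw [← Real.mul_rpow (by norm_num) hδ.le,
            ← Real.mul_rpow (by positivity) (div_nonneg (hpos b hb).le hδ.le)]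
          congr 1
          field_simp
          ring
      _ ≤ 8 ^ s * δ ^ s * (2 * (P ∩ closedBall b.1 b.2).ncard) := by
          gcongr
          exact (hheavy b hb).2
      _ = _ := by ring
  calc μ E ≤ μ (⋃ b ∈ U, closedBall b.1 (4 * b.2)) := measure_mono hcover
    _ ≤ ∑ b ∈ U, μ (closedBall b.1 (4 * b.2)) := measure_biUnion_finset_le U _
    _ ≤ ∑ b ∈ U, ENNReal.ofReal ((2 * (4 * b.2)) ^ s) :=
        Finset.sum_le_sum fun b hb => hμ _ _ (by linarith [hpos b hb])
    _ = ENNReal.ofReal (∑ b ∈ U, (2 * (4 * b.2)) ^ s) :=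
        (ENNReal.ofReal_sum_of_nonneg fun b hb => by have := hpos b hb; positivity).symm
    _ ≤ ENNReal.ofReal (2 * 8 ^ s * δ ^ s * P.ncard) := by
        refine ENNReal.ofReal_le_ofReal ((Finset.sum_le_sum hball).trans ?_)
        rw [← Finset.mul_sum]
        gcongr
        exact_mod_cast sum_ncard_inter_le_ncard hP U hdisj

theorem exists_isDeltaSSet_subset_of_ofReal_le (μ : OuterMeasure X)
    (hμ : ∀ y r, 0 ≤ r → μ (closedBall y r) ≤ ENNReal.ofReal ((2 * r) ^ s))
    (hδ : 0 < δ) (hs : 0 < s) {c : ℝ} (hc : ENNReal.ofReal c ≤ μ E) :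
    ∃ P ⊆ E, IsDeltaSSet δ s P ∧ c ≤ 2 * 8 ^ s * δ ^ s * P.ncard := by
  have hK : 0 < 2 * 8 ^ s * δ ^ s := by positivity
  obtain ⟨P, hPE, hP, hlarge | hmax⟩ :=
    exists_isDeltaSSet_le_ncard_or_maximal (s := s) (E := E) hδ ⌈c / (2 * 8 ^ s * δ ^ s)⌉₊
  · refine ⟨P, hPE, hP, ?_⟩
    rw [← div_le_iff₀' hK]
    exact (Nat.le_ceil _).trans (by exact_mod_cast hlarge)
  · refine ⟨P, hPE, hP, ?_⟩
    have hcover : ∀ x ∈ E, ∃ y r, x ∈ closedBall y r ∧ IsHeavyBall δ s P y r := by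
      intro x hx
      by_cases hxP : x ∈ P
      · exact ⟨x, δ, mem_closedBall_self hδ.le, isHeavyBall_of_mem hδ hP.1 hxP⟩
      · exact exists_isHeavyBall_of_not_isDeltaSSet_insert hδ hs.le hP hxP (hmax x hx hxP)
    exact (ENNReal.ofReal_le_ofReal_iff (by positivity)).1
      (hc.trans (outerMeasure_le_of_forall_mem_isHeavyBall μ hμ hδ hs hP.1 hcover))

end DeltaSSet

section HausdorffContent

variable {d : ℕ} {s : ℝ}

theorem hausdorffContent_eq_ofFunction (hs : 0 < s) :
    hausdorffContent d s =
      OuterMeasure.ofFunction (fun U => ediam U ^ s) (by simp [ENNReal.zero_rpow_of_pos hs]) := by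
  funext E
  rw [OuterMeasure.ofFunction_apply]
  rfl

theorem hausdorffContent_closedBall_le (hs : 0 < s) (y : EuclideanSpace ℝ (Fin d)) {r : ℝ}
    (hr : 0 ≤ r) : hausdorffContent d s (closedBall y r) ≤ ENNReal.ofReal ((2 * r) ^ s) := by
  have hdiam : ediam (closedBall y r) ≤ ENNReal.ofReal (2 * r) :=
    ediam_le_of_forall_dist_le fun x hx z hz =>
      (dist_triangle_right x z y).trans (by linarith [mem_closedBall.1 hx, mem_closedBall.1 hz])
  rw [hausdorffContent_eq_ofFunction hs, ← ENNReal.ofReal_rpow_of_nonneg (by positivity) hs.le]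
  exact (OuterMeasure.ofFunction_le _).trans (ENNReal.rpow_le_rpow hdiam hs.le)

theorem hausdorffContent_le_hausdorffMeasure (hs : 0 < s) (E : Set (EuclideanSpace ℝ (Fin d))) :
    hausdorffContent d s E ≤ μH[s] E := by
  rw [hausdorffContent_eq_ofFunction hs, ← Measure.toOuterMeasure_apply, Measure.hausdorffMeasure,
    Measure.mkMetric_toOuterMeasure]
  exact OuterMeasure.le_mkMetric _ _ 1 one_pos (fun U _ => OuterMeasure.ofFunction_le U) E

theorem hausdorffContent_eq_zero_of_lt (hds : (d : ℝ) < s) (E : Set (EuclideanSpace ℝ (Fin d))) :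
    hausdorffContent d s E = 0 := by
  have hs : 0 < s := (Nat.cast_nonneg d).trans_lt hds
  refine le_antisymm ((hausdorffContent_le_hausdorffMeasure hs E).trans_eq ?_) zero_le
  lift s to NNReal using hs.le
  refine hausdorffMeasure_of_dimH_lt ((dimH_mono (subset_univ E)).trans_lt ?_)
  rw [Real.dimH_univ_eq_finrank, finrank_euclideanSpace_fin]
  exact_mod_cast hds

end HausdorffContent

theorem stmt_3 (d : ℕ) :
    ∃ C : ℝ, 0 < C ∧
      ∀ (δ s c : ℝ) (E : Set (EuclideanSpace ℝ (Fin d))),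
        0 < δ → 0 < s → 0 < c → hausdorffContent d s E = ENNReal.ofReal c →
        ∃ P : Set (EuclideanSpace ℝ (Fin d)), P ⊆ E ∧ P.Finite ∧
          (∀ x ∈ P, ∀ y ∈ P, x ≠ y → δ ≤ dist x y) ∧
          (∀ (x : EuclideanSpace ℝ (Fin d)) (r : ℝ), δ ≤ r →
            ((P ∩ Metric.closedBall x r).ncard : ℝ) ≤ (r / δ) ^ s) ∧
          C * c * δ ^ (-s) ≤ (P.ncard : ℝ) := by
  refine ⟨(2 * 8 ^ d)⁻¹, by positivity, fun δ s c E hδ hs hc hE => ?_⟩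
  rcases lt_or_ge (d : ℝ) s with hds | hsd
  · rw [hausdorffContent_eq_zero_of_lt hds, eq_comm, ENNReal.ofReal_eq_zero] at hE
    linarith
  have hball := fun y (r : ℝ) => hausdorffContent_closedBall_le (d := d) hs y (r := r)
  rw [hausdorffContent_eq_ofFunction hs] at hE hball
  obtain ⟨P, hPE, ⟨hfin, hsep, hcount⟩, hcP⟩ :=
    exists_isDeltaSSet_subset_of_ofReal_le _ hball hδ hs hE.ge
  refine ⟨P, hPE, hfin, hsep, hcount, ?_⟩
  have h8 : (8 : ℝ) ^ s ≤ 8 ^ d := by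
    simpa using Real.rpow_le_rpow_of_exponent_le (by norm_num : (1 : ℝ) ≤ 8) hsd
  calc (2 * 8 ^ d)⁻¹ * c * δ ^ (-s) ≤ (2 * 8 ^ d)⁻¹ * (2 * 8 ^ d * δ ^ s * P.ncard) * δ ^ (-s) := by
        gcongr
        exact hcP.trans (by gcongr)
    _ = P.ncard := by
        rw [Real.rpow_neg hδ.le]
        field_simp
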